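/- arXiv:2310.08548 — 4 statements merged into one kernel-verified Lean document; each statement's English description precedes it below -/
import Mathlib

section
/- For all real numbers a ≥ 0 and δ ≥ 0, |2h(a+δ) − (h(a) + h(a+2δ))| ≤ 3δ, where h(x) = −x·ln(x) for x > 0 and h(0) = 0. -/
/-- One-dimensional entropy function: `h x = -x * ln x` (Lean's `Real.log 0 = 0`
gives `h 0 = 0`). -/
noncomputable def entropy1 (x : ℝ) : ℝ := -x * Real.log x

theorem entropy_midpoint_bound_I (a δ : ℝ) (ha : 0 ≤ a) (hδ : 0 ≤ δ) :
    |2 * entropy1 (a + δ) - (entropy1 a + entropy1 (a + 2 * δ))| ≤ 3 * δ := by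
  rcases eq_or_lt_of_le hδ with h0 | hδpos
  · simp [← h0, entropy1]; ring
  · have hd1 : 0 < a + δ := by linarith
    have hd2 : 0 < a + 2 * δ := by linarith
    have key1 : Real.log (a + 2 * δ) - Real.log (a + δ) ≤ δ / (a + δ) := by
      rw [← Real.log_div (ne_of_gt hd2) (ne_of_gt hd1)]
      have h := Real.log_le_sub_one_of_pos (div_pos hd2 hd1)
      have he : (a + 2 * δ) / (a + δ) - 1 = δ / (a + δ) := by field_simp; ring
      linarith [he ▸ h]
    have key1' : (Real.log (a + 2 * δ) - Real.log (a + δ)) * (a + δ) ≤ δ :=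
      (le_div_iff₀ hd1).mp key1
    have mono1 : Real.log (a + δ) ≤ Real.log (a + 2 * δ) :=
      Real.log_le_log hd1 (by linarith)
    rcases eq_or_lt_of_le ha with ha0 | hapos
    · -- a = 0
      have ha0' : a = 0 := ha0.symm
      subst ha0'
      have hlog : Real.log (2 * δ) = Real.log 2 + Real.log δ :=
        Real.log_mul (by norm_num) (ne_of_gt hδpos)
      have h2 : Real.log 2 < 0.6931471808 := Real.log_two_lt_d9
      have h2' : 0 < Real.log 2 := Real.log_pos (by norm_num)
      simp only [entropy1, zero_add, hlog, neg_zero, zero_mul]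
      rw [abs_le]
      constructor <;> nlinarith [mul_pos hδpos h2', mul_lt_mul_of_pos_left h2 hδpos]
    · -- a > 0
      have key2 : Real.log (a + δ) - Real.log a ≤ δ / a := by
        rw [← Real.log_div (ne_of_gt hd1) (ne_of_gt hapos)]
        have h := Real.log_le_sub_one_of_pos (div_pos hd1 hapos)
        have he : (a + δ) / a - 1 = δ / a := by field_simp; ring
        linarith [he ▸ h]
      have key2' : (Real.log (a + δ) - Real.log a) * a ≤ δ :=
        (le_div_iff₀ hapos).mp key2
      have mono2 : Real.log a ≤ Real.log (a + δ) :=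
        Real.log_le_log hapos (by linarith)
      simp only [entropy1]
      rw [abs_le]
      have hp1 : 0 ≤ a * (Real.log (a + 2 * δ) - Real.log (a + δ)) :=
        mul_nonneg ha (by linarith)
      have hp2 : 0 ≤ a * (Real.log (a + δ) - Real.log a) :=
        mul_nonneg ha (by linarith)
      have hp3 : 0 ≤ (a + 2 * δ) * (Real.log (a + 2 * δ) - Real.log (a + δ)) :=
        mul_nonneg (le_of_lt hd2) (by linarith)
      constructor <;> nlinarith
end

section
/- For all real numbers a, b ≥ 0, |h((a+b)/2) − (h(a)+h(b))/2| ≤ (3/4)·|a−b|, where h(x) = −x·ln(x) for x > 0 and h(0) = 0. -/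
lemma entropy_half_abs (b : ℝ) (hb : 0 ≤ b) :
    |entropy1 (b / 2) - entropy1 b / 2| ≤ (3 / 4) * b := by
  rcases eq_or_lt_of_le hb with rfl | hb'
  · simp [entropy1]
  · have h2 : Real.log (b / 2) = Real.log b - Real.log 2 :=
      Real.log_div (ne_of_gt hb') (by norm_num)
    have he : entropy1 (b / 2) - entropy1 b / 2 = (b / 2) * Real.log 2 := by
      simp only [entropy1]
      rw [h2]; ring
    rw [he, abs_of_nonneg (by positivity)]
    have hlog : Real.log 2 ≤ 1 := by
      have := Real.log_le_sub_one_of_pos (by norm_num : (0:ℝ) < 2)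
      linarith
    nlinarith

theorem entropy_midpoint_bound_II (a b : ℝ) (ha : 0 ≤ a) (hb : 0 ≤ b) :
    |entropy1 ((a + b) / 2) - (entropy1 a + entropy1 b) / 2| ≤ (3 / 4) * |a - b| := by
  have h0 : entropy1 0 = 0 := by simp [entropy1]
  rcases eq_or_lt_of_le ha with rfl | ha'
  · rw [zero_add, h0, zero_add, zero_sub, abs_neg, abs_of_nonneg hb]
    exact entropy_half_abs b hb
  rcases eq_or_lt_of_le hb with rfl | hb'
  · rw [add_zero, h0, add_zero, sub_zero, abs_of_nonneg ha]
    exact entropy_half_abs a ha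
  -- both positive
  have hm : (0:ℝ) < (a + b) / 2 := by positivity
  set m : ℝ := (a + b) / 2 with hmdef
  set x : ℝ := Real.log a - Real.log m with hx
  set y : ℝ := Real.log b - Real.log m with hy
  have hxu : m * x ≤ a - m := by
    have h1 : Real.log (a / m) ≤ a / m - 1 := Real.log_le_sub_one_of_pos (by positivity)
    rw [Real.log_div (ne_of_gt ha') (ne_of_gt hm)] at h1
    have := mul_le_mul_of_nonneg_left h1 (le_of_lt hm)
    calc m * x = m * (Real.log a - Real.log m) := by rw [hx]
      _ ≤ m * (a / m - 1) := this
      _ = a - m := by field_simp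
  have hxl : a - m ≤ a * x := by
    have h1 : Real.log (m / a) ≤ m / a - 1 := Real.log_le_sub_one_of_pos (by positivity)
    rw [Real.log_div (ne_of_gt hm) (ne_of_gt ha')] at h1
    have := mul_le_mul_of_nonneg_left h1 (le_of_lt ha')
    have h2 : a * (Real.log m - Real.log a) ≤ m - a := by
      calc a * (Real.log m - Real.log a) ≤ a * (m / a - 1) := this
        _ = m - a := by field_simp
    have : a * x = -(a * (Real.log m - Real.log a)) := by rw [hx]; ring
    linarith [this ▸ neg_le_neg h2]
  have hyu : m * y ≤ b - m := by
    have h1 : Real.log (b / m) ≤ b / m - 1 := Real.log_le_sub_one_of_pos (by positivity)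
    rw [Real.log_div (ne_of_gt hb') (ne_of_gt hm)] at h1
    have := mul_le_mul_of_nonneg_left h1 (le_of_lt hm)
    calc m * y = m * (Real.log b - Real.log m) := by rw [hy]
      _ ≤ m * (b / m - 1) := this
      _ = b - m := by field_simp
  have hyl : b - m ≤ b * y := by
    have h1 : Real.log (m / b) ≤ m / b - 1 := Real.log_le_sub_one_of_pos (by positivity)
    rw [Real.log_div (ne_of_gt hm) (ne_of_gt hb')] at h1
    have := mul_le_mul_of_nonneg_left h1 (le_of_lt hb')
    have h2 : b * (Real.log m - Real.log b) ≤ m - b := by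
      calc b * (Real.log m - Real.log b) ≤ b * (m / b - 1) := this
        _ = m - b := by field_simp
    have : b * y = -(b * (Real.log m - Real.log b)) := by rw [hy]; ring
    linarith [this ▸ neg_le_neg h2]
  have hgap : entropy1 m - (entropy1 a + entropy1 b) / 2 = (a * x + b * y) / 2 := by
    simp only [entropy1, hx, hy, hmdef]
    ring
  clear_value m x y
  have hG0 : 0 ≤ entropy1 m - (entropy1 a + entropy1 b) / 2 := by
    rw [hgap]
    have h3 : a - m + (b - m) = 0 := by rw [hmdef]; ring
    linarith
  rw [abs_of_nonneg hG0, hgap]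
  -- upper bound: multiplying hxu by a and hyu by b
  have hax : a * (m * x) ≤ a * (a - m) := mul_le_mul_of_nonneg_left hxu (le_of_lt ha')
  have hby : b * (m * y) ≤ b * (b - m) := mul_le_mul_of_nonneg_left hyu (le_of_lt hb')
  rw [hmdef] at hax hby
  have hsum : (a + b) / 2 * (a * x + b * y) ≤ (a - b)^2 / 2 := by nlinarith [hax, hby]
  have habs1 : |a - b| ≤ a + b := by
    rw [abs_le]; constructor <;> linarith
  have habs2 : (a - b)^2 = |a - b|^2 := (sq_abs (a - b)).symm
  have habsnn : 0 ≤ |a - b| := abs_nonneg _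
  have hab : 0 < a + b := by linarith
  nlinarith [hsum, mul_le_mul_of_nonneg_left habs1 habsnn, hab]
end

section
/- For points x, y in the probability simplex Δ_d = {x ∈ ℝ^d : x_i ≥ 0, Σ x_i = 1}, the Jensen gap of the Shannon entropy satisfies H((x+y)/2) − (H(x)+H(y))/2 ≤ (3/4)·‖x−y‖₁, where H(x) = −Σ_i x_i ln(x_i) (with 0·ln 0 := 0). -/
open Finset

lemma step_aux (a m : ℝ) (ha : 0 ≤ a) (hm : 0 < m) :
    m * (a * Real.log a - a * Real.log m) ≤ a * (a - m) := by
  rcases ha.eq_or_lt with h | h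
  · simp [← h]
  · have hlog := Real.log_le_sub_one_of_pos (div_pos h hm)
    rw [Real.log_div h.ne' hm.ne'] at hlog
    have h1 : a * m * (Real.log a - Real.log m) ≤ a * m * (a / m - 1) := by
      apply mul_le_mul_of_nonneg_left hlog (by positivity)
    have h2 : a * m * (a / m - 1) = a * (a - m) := by field_simp
    nlinarith

lemma pt_bound (a b : ℝ) (ha : 0 ≤ a) (hb : 0 ≤ b) :
    (a * Real.log a + b * Real.log b) / 2 - ((a + b) / 2) * Real.log ((a + b) / 2)
      ≤ (3 / 4) * |a - b| := by
  rcases (add_nonneg ha hb).eq_or_lt with h | h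
  · have ha0 : a = 0 := by linarith
    have hb0 : b = 0 := by linarith
    simp [ha0, hb0]
  · set m : ℝ := (a + b) / 2 with hm
    have hm0 : 0 < m := by positivity
    have h1 := step_aux a m ha hm0
    have h2 := step_aux b m hb hm0
    have habs : |a - b| ≤ a + b := by
      rw [abs_le]; constructor <;> linarith
    have hsq : (a - b) ^ 2 ≤ |a - b| * (a + b) := by
      nlinarith [sq_abs (a - b), abs_nonneg (a - b)]
    have hsum : m * ((a * Real.log a - a * Real.log m) +
        (b * Real.log b - b * Real.log m)) ≤ |a - b| * m := by
      have : a * (a - m) + b * (b - m) = (a - b) ^ 2 / 2 := by rw [hm]; ring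
      nlinarith
    have hX : (a * Real.log a - a * Real.log m) +
        (b * Real.log b - b * Real.log m) ≤ |a - b| := by
      nlinarith
    have key : (a * Real.log a + b * Real.log b) / 2 - m * Real.log m
        = ((a * Real.log a - a * Real.log m) + (b * Real.log b - b * Real.log m)) / 2 := by
      rw [hm]; ring
    rw [key]
    have habs0 : 0 ≤ |a - b| := abs_nonneg _
    linarith

/-- Shannon entropy `H x = -∑ i, x i * ln (x i)` (with `Real.log 0 = 0`, so
`0 * ln 0 = 0`). -/
noncomputable def shannonEntropy {d : ℕ} (x : Fin d → ℝ) : ℝ :=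
  -∑ i, x i * Real.log (x i)

theorem jensen_gap_le_l1 {d : ℕ} (x y : Fin d → ℝ)
    (hx : ∀ i, 0 ≤ x i) (hy : ∀ i, 0 ≤ y i)
    (hx1 : ∑ i, x i = 1) (hy1 : ∑ i, y i = 1) :
    shannonEntropy (fun i => (x i + y i) / 2) -
      (shannonEntropy x + shannonEntropy y) / 2 ≤ (3 / 4) * ∑ i, |x i - y i| := by
  unfold shannonEntropy
  beta_reduce
  rw [Finset.mul_sum]
  have h := Finset.sum_le_sum (fun i (_ : i ∈ Finset.univ) =>
    pt_bound (x i) (y i) (hx i) (hy i))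
  rw [Finset.sum_sub_distrib, ← Finset.sum_div, Finset.sum_add_distrib] at h
  linarith
end

section
/- Suppose a discrepancy bound f(m) = c·sqrt(d·log log m) (for a constant c) holds at each halving step. If at each of t steps the data set size is halved starting from n, then the total KDE error satisfies ‖KDE_X − KDE_{X_t}‖_∞ ≤ Σ_{s=1}^{t} (2^{s−1}/n)·f(n/2^{s−1}), and this sum is at most a universal constant times its final term (2^{t−1}/n)·f(n/2^{t−1}), provided n/2^{t−1} ≥ 16. -/
/-!
Write `a s = (2^(s-1)/n) f(n/2^(s-1))`. Since `log (2x) ≤ (log x)^2` once `log x ≥ 2`, we get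
`log log (2x) ≤ 2 log log x`, hence `f(2x) ≤ √2 f(x)` and `a s ≤ (√2/2) a (s+1)`: the terms
decay geometrically going backwards from `a t`, so the sum is at most `a t / (1 - √2/2)`.
-/

open Finset Real

theorem sum_Icc_le_div_one_sub_of_le_mul_succ {a : ℕ → ℝ} {q : ℝ} (hq₀ : 0 ≤ q) (hq : q < 1)
    (ha : 0 ≤ a 1) {t : ℕ} (ht : 1 ≤ t) (hrat : ∀ s ∈ Ico 1 t, a s ≤ q * a (s + 1)) :
    ∑ s ∈ Icc 1 t, a s ≤ a t / (1 - q) := by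
  have hq' : 0 < 1 - q := by linarith
  induction t, ht using Nat.le_induction with
  | base =>
    rw [Icc_self, sum_singleton, le_div_iff₀ hq']
    nlinarith
  | succ t ht ih =>
    have hlast : a t ≤ q * a (t + 1) := hrat t (mem_Ico.mpr ⟨ht, t.lt_succ_self⟩)
    have hprev := ih fun s hs ↦ hrat s (Ico_subset_Ico_right t.le_succ hs)
    rw [sum_Icc_succ_top (by omega)]
    calc ∑ s ∈ Icc 1 t, a s + a (t + 1) ≤ q * a (t + 1) / (1 - q) + a (t + 1) := by
          gcongr
          exact hprev.trans (div_le_div_of_nonneg_right hlast hq'.le)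
      _ = a (t + 1) / (1 - q) := by field_simp; ring

theorem log_log_two_mul_le {x : ℝ} (hx : 2 ≤ log x) : log (log (2 * x)) ≤ 2 * log (log x) := by
  have hx₀ : x ≠ 0 := by rintro rfl; norm_num at hx
  have hlog2 : log 2 < 1 := by linarith [log_two_lt_d9]
  have hlog : log (2 * x) = log 2 + log x := log_mul two_ne_zero hx₀
  calc log (log (2 * x)) ≤ log (log x ^ 2) := by
        apply log_le_log (by rw [hlog]; linarith [log_two_gt_d9])
        rw [hlog]; nlinarith
    _ = 2 * log (log x) := by rw [log_pow]; norm_num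

/-- The paper's per-step discrepancy bound `f`. -/
noncomputable def loglogBound (c d x : ℝ) : ℝ := c * √(d * log (log x))

theorem loglogBound_nonneg {c : ℝ} (hc : 0 ≤ c) (d x : ℝ) : 0 ≤ loglogBound c d x :=
  mul_nonneg hc (sqrt_nonneg _)

theorem loglogBound_two_mul_le {c d x : ℝ} (hc : 0 ≤ c) (hd : 0 ≤ d) (hx : 2 ≤ log x) :
    loglogBound c d (2 * x) ≤ √2 * loglogBound c d x := by
  have h : d * log (log (2 * x)) ≤ 2 * (d * log (log x)) := by
    nlinarith [log_log_two_mul_le hx]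
  calc loglogBound c d (2 * x) ≤ c * √(2 * (d * log (log x))) := by
        unfold loglogBound; gcongr
    _ = √2 * loglogBound c d x := by
        rw [loglogBound, sqrt_mul zero_le_two]; ring

theorem two_le_log_of_sixteen_le {x : ℝ} (hx : 16 ≤ x) : 2 ≤ log x :=
  calc (2 : ℝ) ≤ 4 * log 2 := by linarith [log_two_gt_d9]
    _ = log 16 := by rw [show (16 : ℝ) = 2 ^ 4 by norm_num, log_pow]; norm_num
    _ ≤ log x := log_le_log (by norm_num) hx

theorem halving_sum_dominated_by_last_term :
    ∃ C : ℝ, 0 < C ∧ ∀ (c d : ℝ) (n t : ℕ), 0 < c → 1 ≤ d → 1 ≤ t →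
      2 ^ (t - 1) ∣ n → (16 : ℝ) ≤ (n : ℝ) / 2 ^ (t - 1) →
      ∑ s ∈ Finset.Icc 1 t, ((2 : ℝ) ^ (s - 1) / (n : ℝ)) *
          (c * Real.sqrt (d * Real.log (Real.log ((n : ℝ) / 2 ^ (s - 1))))) ≤
        C * (((2 : ℝ) ^ (t - 1) / (n : ℝ)) *
          (c * Real.sqrt (d * Real.log (Real.log ((n : ℝ) / 2 ^ (t - 1)))))) := by
  have hq : √2 / 2 < 1 := by linarith [sqrt_two_lt_three_halves]
  refine ⟨(1 - √2 / 2)⁻¹, inv_pos.mpr (by linarith), fun c d n t hc hd ht _ h16 ↦ ?_⟩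
  set a : ℕ → ℝ := fun s ↦ (2 ^ (s - 1) / n) * loglogBound c d (n / 2 ^ (s - 1))
  have hrat : ∀ s ∈ Ico 1 t, a s ≤ √2 / 2 * a (s + 1) := by
    intro s hs
    obtain ⟨k, rfl⟩ : ∃ k, s = k + 1 := ⟨s - 1, by grind⟩
    have hx : 16 ≤ (n : ℝ) / 2 ^ (k + 1) := h16.trans <| by
      gcongr
      · norm_num
      · grind
    have hhalf : (n : ℝ) / 2 ^ k = 2 * (n / 2 ^ (k + 1)) := by rw [pow_succ]; field_simp
    calc a (k + 1) = 2 ^ k / n * loglogBound c d (2 * (n / 2 ^ (k + 1))) := by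
          simp only [a, Nat.add_sub_cancel, hhalf]
      _ ≤ 2 ^ k / n * (√2 * loglogBound c d (n / 2 ^ (k + 1))) := by
          gcongr
          exact loglogBound_two_mul_le hc.le (by linarith) (two_le_log_of_sixteen_le hx)
      _ = √2 / 2 * a (k + 1 + 1) := by simp only [a, Nat.add_sub_cancel, pow_succ]; ring
  have ha : 0 ≤ a 1 := mul_nonneg (by positivity) (loglogBound_nonneg hc.le _ _)
  rw [← div_eq_inv_mul]
  exact sum_Icc_le_div_one_sub_of_le_mul_succ (by positivity) hq ha ht hrat
end
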